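/- arXiv:2411.14349 — 2 statements merged into one kernel-verified Lean document; each statement's English description precedes it below -/
import Mathlib

section
/- As b → −∞, E_{z∼N(0,1)}[σ(z+b)²] = (2 + o(1)) · Φ(b)/b². Concretely, the ratio of (b²+1)Φ(b) − |b|φ(b) to 2Φ(b)/b² tends to 1 as b → −∞. -/
open MeasureTheory ProbabilityTheory Real Filter

noncomputable def phi (t : ℝ) : ℝ := (Real.sqrt (2 * Real.pi))⁻¹ * Real.exp (-t ^ 2 / 2)

noncomputable def Phi (b : ℝ) : ℝ := ∫ t in Set.Iic b, phi t

/-!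
With `x = b⁻¹`, the functions `φ(b)(-x + x³ - 3x⁵) - Φ(b)` and
`Φ(b) - φ(b)(-x + x³ - 3x⁵ + 15x⁷)` tend to `0` at `-∞` and have derivatives `15 φ(b) x⁶ ≥ 0`
and `105 φ(b) x⁸ ≥ 0`, so both are nonnegative for `b < 0`. Hence
`Φ(b) = φ(b)(-x + x³ - 3x⁵ + s x⁷)` with `0 ≤ s ≤ 15`, and substituting this turns the ratio
into a rational function of `x` and `s x²` that is continuous at `(0, 0)` with value `1`.
-/

open Set Topology

lemma phi_eq_gaussianPDFReal : phi = gaussianPDFReal 0 1 := by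
  ext t
  simp [phi, gaussianPDFReal]

lemma phi_pos (t : ℝ) : 0 < phi t :=
  phi_eq_gaussianPDFReal ▸ gaussianPDFReal_pos 0 1 t one_ne_zero

lemma integrable_phi : Integrable phi :=
  phi_eq_gaussianPDFReal ▸ integrable_gaussianPDFReal 0 1

lemma hasDerivAt_phi (t : ℝ) : HasDerivAt phi (-t * phi t) t := by
  have hexponent : HasDerivAt (fun s : ℝ => -s ^ 2 / 2) (-t) t :=
    ((hasDerivAt_pow 2 t).neg.div_const 2).congr_deriv (by ring)
  exact (hexponent.exp.const_mul _).congr_deriv (by rw [phi]; ring)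

lemma tendsto_phi_atBot : Tendsto phi atBot (𝓝 0) := by
  have hsq : Tendsto (fun t : ℝ => t ^ 2) atBot atTop := by
    simpa [Function.comp_def] using
      (tendsto_pow_atTop two_ne_zero).comp (tendsto_neg_atBot_atTop (G := ℝ))
  have hexponent : Tendsto (fun t : ℝ => -t ^ 2 / 2) atBot atBot :=
    (tendsto_neg_atTop_atBot.comp hsq).atBot_div_const two_pos
  have hexp := tendsto_exp_atBot.comp hexponent
  show Tendsto (fun t => (√(2 * π))⁻¹ * rexp (-t ^ 2 / 2)) atBot (𝓝 0)
  simpa [Function.comp_def, neg_div] using hexp.const_mul (√(2 * π))⁻¹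

lemma Phi_pos (b : ℝ) : 0 < Phi b := by
  rw [Phi, setIntegral_pos_iff_support_of_nonneg_ae (ae_of_all _ fun t => (phi_pos t).le)
    integrable_phi.integrableOn, Function.support_eq_univ fun t => (phi_pos t).ne', univ_inter,
    Real.volume_Iic]
  exact ENNReal.zero_lt_top

lemma hasDerivAt_Phi (b : ℝ) : HasDerivAt Phi (phi b) b := by
  have hPhi : Phi = fun x => Phi 0 + ∫ t in (0 : ℝ)..x, phi t := by
    ext x
    rw [Phi, Phi, ← intervalIntegral.integral_Iic_sub_Iic integrable_phi.integrableOn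
      integrable_phi.integrableOn]
    ring
  have hcont : Continuous phi := by unfold phi; fun_prop
  rw [hPhi]
  exact (intervalIntegral.integral_hasDerivAt_right integrable_phi.intervalIntegrable
    (hcont.stronglyMeasurableAtFilter _ _) hcont.continuousAt).const_add _

lemma tendsto_Phi_atBot : Tendsto Phi atBot (𝓝 0) :=
  tendsto_integral_Iic_zero tendsto_id

lemma nonneg_of_hasDerivAt_nonneg_of_tendsto_atBot {f f' : ℝ → ℝ} {a : ℝ}
    (hf : ∀ x < a, HasDerivAt f (f' x) x) (hf' : ∀ x < a, 0 ≤ f' x)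
    (hlim : Tendsto f atBot (𝓝 0)) {b : ℝ} (hb : b < a) : 0 ≤ f b := by
  have hmono : MonotoneOn f (Iio a) :=
    monotoneOn_of_hasDerivWithinAt_nonneg (convex_Iio a)
      (fun x hx => (hf x hx).continuousAt.continuousWithinAt)
      (fun x hx => (hf x (by simpa using hx)).hasDerivWithinAt)
      (fun x hx => hf' x (by simpa using hx))
  refine le_of_tendsto hlim ?_
  filter_upwards [eventually_le_atBot b] with x hx
  exact hmono (hx.trans_lt hb) hb hx

lemma Phi_le_of_neg {b : ℝ} (hb : b < 0) :
    Phi b ≤ phi b * (-b⁻¹ + b⁻¹ ^ 3 - 3 * b⁻¹ ^ 5) := by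
  set U := fun x => phi x * (-x⁻¹ + x⁻¹ ^ 3 - 3 * x⁻¹ ^ 5) - Phi x
  have hU : ∀ x < 0, HasDerivAt U (15 * phi x * x⁻¹ ^ 6) x := by
    intro x hx
    have hx0 : x ≠ 0 := hx.ne
    have hinv := hasDerivAt_inv hx0
    refine ((hasDerivAt_phi x).mul ((hinv.neg.add (hinv.pow 3)).sub
      ((hinv.pow 5).const_mul 3))).sub (hasDerivAt_Phi x) |>.congr_deriv ?_
    simp only [Pi.add_apply, Pi.sub_apply, Pi.neg_apply, Pi.pow_apply, inv_pow]
    field_simp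
    ring
  have hlim : Tendsto U atBot (𝓝 0) := by
    have hx := tendsto_inv_atBot_zero (𝕜 := ℝ)
    simpa [U] using (tendsto_phi_atBot.mul
      ((hx.neg.add (hx.pow 3)).sub ((hx.pow 5).const_mul 3))).sub tendsto_Phi_atBot
  have := nonneg_of_hasDerivAt_nonneg_of_tendsto_atBot hU
    (fun x _ => by have := (phi_pos x).le; positivity) hlim hb
  simpa [U] using this

lemma le_Phi_of_neg {b : ℝ} (hb : b < 0) :
    phi b * (-b⁻¹ + b⁻¹ ^ 3 - 3 * b⁻¹ ^ 5 + 15 * b⁻¹ ^ 7) ≤ Phi b := by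
  set L := fun x => Phi x - phi x * (-x⁻¹ + x⁻¹ ^ 3 - 3 * x⁻¹ ^ 5 + 15 * x⁻¹ ^ 7)
  have hL : ∀ x < 0, HasDerivAt L (105 * phi x * x⁻¹ ^ 8) x := by
    intro x hx
    have hx0 : x ≠ 0 := hx.ne
    have hinv := hasDerivAt_inv hx0
    refine (hasDerivAt_Phi x).sub ((hasDerivAt_phi x).mul (((hinv.neg.add (hinv.pow 3)).sub
      ((hinv.pow 5).const_mul 3)).add ((hinv.pow 7).const_mul 15))) |>.congr_deriv ?_
    simp only [Pi.add_apply, Pi.sub_apply, Pi.neg_apply, Pi.pow_apply, inv_pow]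
    field_simp
    ring
  have hlim : Tendsto L atBot (𝓝 0) := by
    have hx := tendsto_inv_atBot_zero (𝕜 := ℝ)
    simpa [L] using tendsto_Phi_atBot.sub (tendsto_phi_atBot.mul (((hx.neg.add (hx.pow 3)).sub
      ((hx.pow 5).const_mul 3)).add ((hx.pow 7).const_mul 15)))
  have := nonneg_of_hasDerivAt_nonneg_of_tendsto_atBot hL
    (fun x _ => by have := (phi_pos x).le; positivity) hlim hb
  simpa [L] using this

-- `Phi b / phi b` is the Mills ratio `m (-b)`, and `-b⁻¹ + b⁻¹ ^ 3 - 3 * b⁻¹ ^ 5` is its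
-- expansion to three terms.
noncomputable def millsRemainder (b : ℝ) : ℝ :=
  (Phi b / phi b - (-b⁻¹ + b⁻¹ ^ 3 - 3 * b⁻¹ ^ 5)) / b⁻¹ ^ 7

lemma millsRemainder_mem_Icc {b : ℝ} (hb : b < 0) : millsRemainder b ∈ Icc 0 15 := by
  have hphi := phi_pos b
  have hpow : b⁻¹ ^ 7 < 0 := Odd.pow_neg (by decide) (inv_lt_zero.mpr hb)
  constructor
  · refine div_nonneg_of_nonpos ?_ hpow.le
    rw [sub_nonpos, div_le_iff₀ hphi, mul_comm]
    exact Phi_le_of_neg hb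
  · rw [millsRemainder, div_le_iff_of_neg hpow, le_sub_iff_add_le, le_div_iff₀ hphi, mul_comm]
    linarith [le_Phi_of_neg hb]

lemma Phi_eq_phi_mul {b : ℝ} (hb : b ≠ 0) :
    Phi b = phi b * (-b⁻¹ + b⁻¹ ^ 3 - 3 * b⁻¹ ^ 5 + millsRemainder b * b⁻¹ ^ 7) := by
  have := (phi_pos b).ne'
  rw [millsRemainder]
  field_simp
  ring

lemma ratio_eq_millsRemainder {b : ℝ} (hb : b < 0) :
    ((b ^ 2 + 1) * Phi b - |b| * phi b) / (2 * Phi b / b ^ 2) =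
      (2 + 3 * b⁻¹ ^ 2 - millsRemainder b * b⁻¹ ^ 2 * (1 + b⁻¹ ^ 2)) /
        (2 * (1 - b⁻¹ ^ 2 + 3 * b⁻¹ ^ 4 - millsRemainder b * b⁻¹ ^ 2 * b⁻¹ ^ 4)) := by
  set D := 1 - b⁻¹ ^ 2 + 3 * b⁻¹ ^ 4 - millsRemainder b * b⁻¹ ^ 2 * b⁻¹ ^ 4
  have hb0 := hb.ne
  have hPhi : Phi b = -phi b * b⁻¹ * D := by
    rw [Phi_eq_phi_mul hb0]
    ring
  have hD : D ≠ 0 := by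
    rintro hD
    exact (Phi_pos b).ne' (by rw [hPhi, hD, mul_zero])
  have := (phi_pos b).ne'
  rw [hPhi, abs_of_neg hb]
  field_simp
  simp only [D]
  field_simp
  ring

/-- As b → −∞, the ratio of (b²+1)Φ(b) − |b|φ(b) to 2Φ(b)/b² tends to 1. -/
theorem stmt_3 :
    Tendsto (fun b : ℝ => ((b ^ 2 + 1) * Phi b - |b| * phi b) / (2 * Phi b / b ^ 2))
      atBot (nhds 1) := by
  set G : ℝ × ℝ → ℝ := fun p =>
    (2 + 3 * p.1 ^ 2 - p.2 * (1 + p.1 ^ 2)) / (2 * (1 - p.1 ^ 2 + 3 * p.1 ^ 4 - p.2 * p.1 ^ 4))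
  have hG : ContinuousAt G (0, 0) := by fun_prop (disch := norm_num)
  have hx : Tendsto (fun b : ℝ => b⁻¹) atBot (𝓝 0) := tendsto_inv_atBot_zero
  have hy : Tendsto (fun b => millsRemainder b * b⁻¹ ^ 2) atBot (𝓝 0) := by
    have h15 : Tendsto (fun b : ℝ => 15 * b⁻¹ ^ 2) atBot (𝓝 0) := by
      simpa using (hx.pow 2).const_mul 15
    have hs : ∀ᶠ b in atBot, millsRemainder b ∈ Icc 0 15 :=
      (eventually_lt_atBot 0).mono fun b hb => millsRemainder_mem_Icc hb
    exact tendsto_of_tendsto_of_tendsto_of_le_of_le' tendsto_const_nhds h15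
      (hs.mono fun b hb => mul_nonneg hb.1 (sq_nonneg _))
      (hs.mono fun b hb => mul_le_mul_of_nonneg_right hb.2 (sq_nonneg _))
  have hlim := hG.tendsto.comp (hx.prodMk_nhds hy)
  rw [show G (0, 0) = 1 by norm_num [G]] at hlim
  refine hlim.congr' ?_
  filter_upwards [eventually_lt_atBot 0] with b hb
  exact (ratio_eq_millsRemainder hb).symm
end

section
/- Fix constants ρ, λ ∈ (0,1) with ρλ > 1/2. Let w, v be unit vectors in ℝ^d with Λ := ⟨w,v⟩ ≥ λ, let b < 0, and let v^⊥ = (v − Λw)/‖v − Λw‖. Then for every x_w ≥ (λ − λ²ρ + ρ)|b| and every x_⊥ ≥ 0, σ(Λx_w + √(1−Λ²)x_⊥ − |b|) − σ(Λx_w − √(1−Λ²)x_⊥ − |b|) ≥ √(1−Λ²) · σ(x_⊥ − √(1−λ²)(1−λρ)|b|). -/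
set_option maxHeartbeats 1000000


open MeasureTheory ProbabilityTheory Real Filter

noncomputable def stdGaussian (d : ℕ) : Measure (Fin d → ℝ) :=
  Measure.pi fun _ => gaussianReal 0 1

noncomputable def dot {d : ℕ} (u x : Fin d → ℝ) : ℝ := ∑ i, u i * x i


noncomputable def relu (z : ℝ) : ℝ := max z 0

/-- Pointwise slice inequality: for ρλ > 1/2, Λ = ⟨w,v⟩ ≥ λ, x_w ≥ (λ−λ²ρ+ρ)|b|, x_⊥ ≥ 0:
σ(Λx_w + √(1−Λ²)x_⊥ − |b|) − σ(Λx_w − √(1−Λ²)x_⊥ − |b|)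
  ≥ √(1−Λ²)·σ(x_⊥ − √(1−λ²)(1−λρ)|b|). -/
theorem stmt_12 (d : ℕ) (w v : Fin d → ℝ)
    (hw : ∑ i, w i ^ 2 = 1) (hv : ∑ i, v i ^ 2 = 1)
    (ρ lam b x_w x_p Λ : ℝ) (hΛ : Λ = dot w v)
    (hρ : ρ ∈ Set.Ioo (0:ℝ) 1) (hlam : lam ∈ Set.Ioo (0:ℝ) 1)
    (hρlam : 1/2 < ρ * lam) (hlamΛ : lam ≤ Λ) (hb : b < 0)
    (hx : (lam - lam ^ 2 * ρ + ρ) * |b| ≤ x_w) (hxp : 0 ≤ x_p) :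
    Real.sqrt (1 - Λ ^ 2) * relu (x_p - Real.sqrt (1 - lam ^ 2) * (1 - lam * ρ) * |b|)
      ≤ relu (Λ * x_w + Real.sqrt (1 - Λ ^ 2) * x_p - |b|)
        - relu (Λ * x_w - Real.sqrt (1 - Λ ^ 2) * x_p - |b|) := by
  obtain ⟨hρ0, hρ1⟩ := hρ
  obtain ⟨hl0, hl1⟩ := hlam
  have hB : 0 < |b| := abs_pos.mpr (ne_of_lt hb)
  have hΛ0 : 0 < Λ := lt_of_lt_of_le hl0 hlamΛ
  have hCS : Λ ^ 2 ≤ 1 := by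
    have h := Finset.sum_mul_sq_le_sq_mul_sq Finset.univ w v
    rw [hw, hv] at h
    simpa [hΛ, dot] using h
  have hΛ1 : Λ ≤ 1 := by nlinarith
  set s := Real.sqrt (1 - Λ ^ 2) with hs
  set sl := Real.sqrt (1 - lam ^ 2) with hsl
  have hs0 : 0 ≤ s := Real.sqrt_nonneg _
  have hsl0 : 0 ≤ sl := Real.sqrt_nonneg _
  have hs2 : s ^ 2 = 1 - Λ ^ 2 := Real.sq_sqrt (by nlinarith)
  have hsl2 : sl ^ 2 = 1 - lam ^ 2 := Real.sq_sqrt (by nlinarith)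
  have hssl : s ≤ sl := Real.sqrt_le_sqrt (by nlinarith)
  have hΛρ : Λ * ρ < 1 := by nlinarith
  have hlamρ : lam * ρ < 1 := by nlinarith
  have h1 : s * (1 - Λ * ρ) ≤ sl * (1 - lam * ρ) :=
    mul_le_mul hssl (by nlinarith) (by nlinarith) hsl0
  have hsc : (1 - Λ ^ 2) * (1 - Λ * ρ) ≤ s * (sl * (1 - lam * ρ)) := by
    calc (1 - Λ ^ 2) * (1 - Λ * ρ) = s * (s * (1 - Λ * ρ)) := by rw [← hs2]; ring
      _ ≤ s * (sl * (1 - lam * ρ)) := mul_le_mul_of_nonneg_left h1 hs0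
  have hf : Λ * (Λ - Λ ^ 2 * ρ + ρ) ≤ Λ * (lam - lam ^ 2 * ρ + ρ) := by
    have hge : 0 ≤ (lam + Λ) * ρ - 1 := by nlinarith
    nlinarith [mul_nonneg (mul_nonneg hΛ0.le (sub_nonneg.mpr hlamΛ)) hge]
  have hxw : Λ * ((lam - lam ^ 2 * ρ + ρ) * |b|) ≤ Λ * x_w :=
    mul_le_mul_of_nonneg_left hx hΛ0.le
  have K : (1 - s * (sl * (1 - lam * ρ))) * |b| ≤ Λ * x_w := by
    nlinarith [mul_le_mul_of_nonneg_right hf hB.le, mul_le_mul_of_nonneg_right hsc hB.le]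
  have hc0 : 0 ≤ sl * (1 - lam * ρ) * |b| := by exact mul_nonneg (mul_nonneg hsl0 (by linarith)) hB.le
  rcases le_total x_p (sl * (1 - lam * ρ) * |b|) with h | h
  · rw [show relu (x_p - sl * (1 - lam * ρ) * |b|) = 0 from max_eq_right (by linarith)]
    have : relu (Λ * x_w - s * x_p - |b|) ≤ relu (Λ * x_w + s * x_p - |b|) :=
      max_le_max (by nlinarith [mul_nonneg hs0 hxp]) le_rfl
    simpa using this
  · rw [show relu (x_p - sl * (1 - lam * ρ) * |b|) = x_p - sl * (1 - lam * ρ) * |b| from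
      max_eq_left (by linarith)]
    rcases le_total (Λ * x_w - s * x_p - |b|) 0 with h2 | h2
    · rw [show relu (Λ * x_w - s * x_p - |b|) = 0 from max_eq_right h2]
      have h3 : Λ * x_w + s * x_p - |b| ≤ relu (Λ * x_w + s * x_p - |b|) := le_max_left _ _
      nlinarith [mul_le_mul_of_nonneg_left h hs0]
    · rw [show relu (Λ * x_w - s * x_p - |b|) = Λ * x_w - s * x_p - |b| from max_eq_left h2,
        show relu (Λ * x_w + s * x_p - |b|) = Λ * x_w + s * x_p - |b| from
          max_eq_left (by nlinarith [mul_nonneg hs0 hxp])]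
      nlinarith [mul_nonneg hs0 hc0, mul_nonneg hs0 hxp, mul_le_mul_of_nonneg_left h hs0]
end
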